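/- arXiv:0712.4021 — 4 statements merged into one kernel-verified Lean document; each statement's English description precedes it below -/
import Mathlib

section
/- If W ∈ ℂ[x₁,…,x_N] is a quasi-homogeneous polynomial with uniquely determined positive rational weights q₁,…,q_N (i.e., the exponent matrix of W has rank N), then the group G_W = { (α₁,…,α_N) ∈ (ℂ*)^N : W(α₁x₁,…,α_Nx_N) = W(x₁,…,x_N) } of diagonal symmetries of W is finite. -/
/-!
Comparing coefficients, a diagonal symmetry `α` of `W` has `α ^ d = ∏ αⱼ ^ dⱼ = 1` for every
exponent vector `d` of `W`; hence `α ^ v = 1` for every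
`v` in the `ℤ`-span of these exponents. Since they span `ℚ^N`, some nonzero multiple `n • eᵢ` of
each basis vector lies in that `ℤ`-span, so `αᵢ ^ n = 1`. Each `αᵢ` is therefore a root of unity
of an order independent of `α`, and there are finitely many of these.
-/

open MvPolynomial Submodule

theorem exists_ne_zero_zsmul_mem_span_of_span_rat_eq_top {σ : Type*} {D : Set (σ → ℤ)}
    (hD : span ℚ ((fun d j => (d j : ℚ)) '' D) = ⊤) (w : σ → ℤ) :
    ∃ n : ℤ, n ≠ 0 ∧ n • w ∈ span ℤ D := by
  let ι : (σ → ℤ) →ₗ[ℤ] σ → ℚ := LinearMap.compLeft (Algebra.linearMap ℤ ℚ) σ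
  have hι : Function.Injective ι := fun v v' h => funext fun j => Int.cast_injective (congrFun h j)
  have hw : ι w ∈ span ℚ (ι '' D) := hD ▸ mem_top
  obtain ⟨y, hy, ⟨n, hn⟩, hwy⟩ := (IsLocalization.mem_span_iff (nonZeroDivisors ℤ)).1 hw
  rw [span_image] at hy
  obtain ⟨v, hv, rfl⟩ := hy
  have hnw : n • w = v := hι <| by
    rw [map_zsmul, hwy, ← smul_assoc, IsLocalization.smul_mk'_one, IsLocalization.mk'_self,
      one_smul]
  exact ⟨n, nonZeroDivisors.ne_zero hn, hnw ▸ hv⟩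

section LaurentMonomials

variable {σ G : Type*} [Fintype σ] [CommGroup G]

theorem prod_zpow_eq_one_of_mem_span {D : Set (σ → ℤ)} {α : σ → G}
    (hα : ∀ d ∈ D, ∏ j, α j ^ d j = 1) {v : σ → ℤ} (hv : v ∈ span ℤ D) :
    ∏ j, α j ^ v j = 1 := by
  induction hv using span_induction with
  | mem d hd => exact hα d hd
  | zero => simp
  | add v w _ _ hv hw => simp [zpow_add, Finset.prod_mul_distrib, hv, hw]
  | smul n v _ hv => simp [zpow_mul', Finset.prod_zpow, hv]

theorem exists_zpow_eq_one_of_span_rat_eq_top {D : Set (σ → ℤ)}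
    (hD : span ℚ ((fun d j => (d j : ℚ)) '' D) = ⊤) (i : σ) :
    ∃ n : ℤ, n ≠ 0 ∧ ∀ α : σ → G, (∀ d ∈ D, ∏ j, α j ^ d j = 1) → α i ^ n = 1 := by
  classical
  obtain ⟨n, hn, hmem⟩ := exists_ne_zero_zsmul_mem_span_of_span_rat_eq_top hD (Pi.single i 1)
  refine ⟨n, hn, fun α hα => ?_⟩
  have h := prod_zpow_eq_one_of_mem_span hα hmem
  rw [Fintype.prod_eq_single i fun j hj => by simp [hj]] at h
  simpa using h

end LaurentMonomials

section DiagonalSymmetries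

variable {σ R : Type*} [Fintype σ]

theorem MvPolynomial.aeval_C_mul_X_monomial [CommSemiring R] (c : σ → R) (d : σ →₀ ℕ) (a : R) :
    aeval (fun i => C (c i) * X i) (monomial d a) = monomial d ((∏ j, c j ^ d j) * a) := by
  rw [aeval_monomial, Finsupp.prod_fintype _ _ (by simp)]
  simp only [mul_pow, Finset.prod_mul_distrib, ← map_pow, ← map_prod]
  rw [monomial_eq, Finsupp.prod_fintype _ _ (by simp), algebraMap_eq, C_mul]
  ring

theorem MvPolynomial.coeff_aeval_C_mul_X [CommSemiring R] (c : σ → R) (p : MvPolynomial σ R)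
    (d : σ →₀ ℕ) :
    coeff d (aeval (fun i => C (c i) * X i) p) = (∏ j, c j ^ d j) * coeff d p := by
  classical
  induction p using MvPolynomial.induction_on' with
  | monomial e a =>
    rw [aeval_C_mul_X_monomial, coeff_monomial, coeff_monomial]
    split_ifs with h <;> simp [h]
  | add p q hp hq => rw [map_add, coeff_add, coeff_add, hp, hq, mul_add]

variable [CommRing R] [IsDomain R]

theorem MvPolynomial.prod_zpow_eq_one_of_aeval_C_mul_X_eq_self {p : MvPolynomial σ R}
    {α : σ → Rˣ} (hα : aeval (fun i => C (α i : R) * X i) p = p) {d : σ →₀ ℕ}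
    (hd : d ∈ p.support) : ∏ j, α j ^ (d j : ℤ) = 1 := by
  have hcoeff := congrArg (coeff d) hα
  rw [coeff_aeval_C_mul_X, mul_eq_right₀ (mem_support_iff.mp hd)] at hcoeff
  exact Units.ext (by simpa using hcoeff)

theorem MvPolynomial.finite_setOf_aeval_C_mul_X_eq_self (p : MvPolynomial σ R)
    (hp : span ℚ ((fun (d : σ →₀ ℕ) j => (d j : ℚ)) '' (p.support : Set (σ →₀ ℕ))) = ⊤) :
    {α : σ → Rˣ | aeval (fun i => C (α i : R) * X i) p = p}.Finite := by
  set D : Set (σ → ℤ) := (fun (d : σ →₀ ℕ) j => (d j : ℤ)) '' p.support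
  have hD : span ℚ ((fun (v : σ → ℤ) j => (v j : ℚ)) '' D) = ⊤ := by
    rw [Set.image_image]
    simpa using hp
  choose n hn hroot using exists_zpow_eq_one_of_span_rat_eq_top (G := Rˣ) hD
  refine (Set.Finite.pi (t := fun i => (rootsOfUnity (n i).natAbs R : Set Rˣ)) fun i => ?_).subset
    fun α hα i _ => ?_
  · have : NeZero (n i).natAbs := ⟨Int.natAbs_ne_zero.mpr (hn i)⟩
    exact Set.finite_coe_iff.mp (inferInstanceAs (Finite (rootsOfUnity _ R)))
  · rw [SetLike.mem_coe, mem_rootsOfUnity, pow_natAbs_eq_one]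
    refine hroot i α ?_
    rintro _ ⟨d, hd, rfl⟩
    exact prod_zpow_eq_one_of_aeval_C_mul_X_eq_self hα hd

end DiagonalSymmetries

theorem diagonal_symmetry_group_finite_general (N : ℕ) (W : MvPolynomial (Fin N) ℂ)
    (hrank : Submodule.span ℚ
        ((fun (d : Fin N →₀ ℕ) (i : Fin N) => (d i : ℚ)) '' (W.support : Set (Fin N →₀ ℕ))) = ⊤) :
    {α : Fin N → ℂˣ |
        MvPolynomial.aeval (fun i => MvPolynomial.C (α i : ℂ) * MvPolynomial.X i) W = W}.Finite :=
  finite_setOf_aeval_C_mul_X_eq_self W hrank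

/-- If `W ∈ ℂ[x₁,…,x_N]` is quasi-homogeneous with positive rational weights and the
exponent vectors of `W` span `ℚ^N` (i.e. the exponent matrix has rank `N`, equivalently
the weights are uniquely determined), then the group of diagonal symmetries of `W`
is finite. -/
theorem diagonal_symmetry_group_finite (N : ℕ) (W : MvPolynomial (Fin N) ℂ)
    (q : Fin N → ℚ) (hqpos : ∀ i, 0 < q i)
    (hqh : ∀ d ∈ W.support, ∑ i, (d i : ℚ) * q i = 1)
    (hrank : Submodule.span ℚ
        ((fun (d : Fin N →₀ ℕ) (i : Fin N) => (d i : ℚ)) '' (W.support : Set (Fin N →₀ ℕ))) = ⊤) :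
    {α : Fin N → ℂˣ |
        MvPolynomial.aeval (fun i => MvPolynomial.C (α i : ℂ) * MvPolynomial.X i) W = W}.Finite :=
  diagonal_symmetry_group_finite_general N W hrank
end

section
/- For any primitive r-th root of unity ζ and any integer a with 0 ≤ a < r, the sum Σ_{j=1}^{r-1} ζ^{(a+1)j} / (1 - ζ^j)² equals (1 - r²)/12 + a(r - a)/2. -/
/-!
For an `r`-th root of unity `x ≠ 1`, the rational function `x / (1 - x) ^ 2` agrees with the
polynomial `∑_{k<r} k (r - k) / (2r) · x ^ k`: its coefficients have constant second difference
`-1/r`, so multiplying by `(1 - x) ^ 2` leaves only boundary terms and a multiple of the vanishing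
geometric sum. Substituting `x = ζ ^ j`, multiplying by `x ^ a` and summing over `j` with the
orthogonality relation `∑_{j<r} ζ ^ (j m) = r · [r ∣ m]` picks out the coefficient at `k ≡ -a`,
which is `a (r - a) / (2r)`, and subtracts the sum of all coefficients, `(r ^ 2 - 1) / 12`.
-/

open Finset

section CommRing

variable {R : Type*} [CommRing R]

theorem one_sub_sq_mul_sum_range_mul_sub_mul_pow (m x : R) (n : ℕ) :
    (1 - x) ^ 2 * ∑ k ∈ range n, (k : R) * (m - k) * x ^ k =
      (m + 1) * x - 2 * x * ∑ k ∈ range n, x ^ k - n * (m - n) * x ^ n +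
        (n - 1) * (m - n + 1) * x ^ (n + 1) := by
  induction n with
  | zero => simp only [range_zero, sum_empty, Nat.cast_zero]; ring
  | succ n ih =>
    rw [sum_range_succ, sum_range_succ]
    push_cast
    linear_combination ih

theorem six_mul_sum_range_mul_sub (m : R) (n : ℕ) :
    6 * ∑ k ∈ range n, (k : R) * (m - k) = 3 * m * n * (n - 1) - (n - 1) * n * (2 * n - 1) := by
  induction n with
  | zero => simp
  | succ n ih =>
    rw [sum_range_succ]
    push_cast
    linear_combination ih

variable [IsDomain R]

theorem geom_sum_eq_zero_of_pow_eq_one {x : R} {n : ℕ} (hx : x ^ n = 1) (hx1 : x ≠ 1) :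
    ∑ k ∈ range n, x ^ k = 0 := by
  have h := geom_sum_mul x n
  rw [hx, sub_self] at h
  exact (mul_eq_zero.1 h).resolve_right (sub_ne_zero.2 hx1)

theorem one_sub_sq_mul_sum_range_mul_sub_mul_pow_of_pow_eq_one {x : R} {n : ℕ}
    (hx : x ^ n = 1) (hx1 : x ≠ 1) :
    (1 - x) ^ 2 * ∑ k ∈ range n, (k : R) * (n - k) * x ^ k = 2 * n * x := by
  rw [one_sub_sq_mul_sum_range_mul_sub_mul_pow, geom_sum_eq_zero_of_pow_eq_one hx hx1, pow_succ,
    hx]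
  ring

theorem IsPrimitiveRoot.sum_range_pow_pow {ζ : R} {r : ℕ} (hζ : IsPrimitiveRoot ζ r) (m : ℕ) :
    ∑ j ∈ range r, (ζ ^ j) ^ m = if r ∣ m then (r : R) else 0 := by
  simp_rw [← pow_mul, mul_comm _ m, pow_mul]
  split_ifs with h
  · simp [(hζ.pow_eq_one_iff_dvd m).2 h]
  · refine geom_sum_eq_zero_of_pow_eq_one ?_ (mt (hζ.pow_eq_one_iff_dvd m).1 h)
    rw [← pow_mul, mul_comm, pow_mul, hζ.pow_eq_one, one_pow]

theorem IsPrimitiveRoot.sum_Ico_pow_pow {ζ : R} {r : ℕ} (hζ : IsPrimitiveRoot ζ r) (hr : 0 < r)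
    (m : ℕ) : ∑ j ∈ Ico 1 r, (ζ ^ j) ^ m = (if r ∣ m then (r : R) else 0) - 1 := by
  rw [sum_Ico_eq_sub _ hr, hζ.sum_range_pow_pow]
  simp

end CommRing

section Field

variable {K : Type*} [Field K] [CharZero K]

theorem pow_succ_div_one_sub_sq_eq_sum_range {x : K} {n : ℕ} (hn : 0 < n) (hx : x ^ n = 1)
    (hx1 : x ≠ 1) (a : ℕ) :
    x ^ (a + 1) / (1 - x) ^ 2 = ∑ k ∈ range n, (k : K) * (n - k) / (2 * n) * x ^ (a + k) := by
  have hkey := one_sub_sq_mul_sum_range_mul_sub_mul_pow_of_pow_eq_one hx hx1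
  have h1x : (1 - x) ^ 2 ≠ 0 := pow_ne_zero 2 (sub_ne_zero.2 hx1.symm)
  have hn0 : (n : K) ≠ 0 := Nat.cast_ne_zero.2 hn.ne'
  have hsum : ∑ k ∈ range n, (k : K) * (n - k) / (2 * n) * x ^ (a + k) =
      x ^ a / (2 * n) * ∑ k ∈ range n, (k : K) * (n - k) * x ^ k := by
    rw [mul_sum]
    refine sum_congr rfl fun k _ => ?_
    rw [pow_add]
    ring
  rw [hsum, eq_div_of_mul_eq h1x ((mul_comm _ _).trans hkey)]
  field_simp
  ring

theorem sum_range_mul_sub_div {n : ℕ} (hn : n ≠ 0) :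
    ∑ k ∈ range n, (k : K) * (n - k) / (2 * n) = (n ^ 2 - 1) / 12 := by
  have h6 := six_mul_sum_range_mul_sub (n : K) n
  have hn0 : (n : K) ≠ 0 := Nat.cast_ne_zero.2 hn
  rw [← sum_div, div_eq_iff (mul_ne_zero two_ne_zero hn0)]
  linear_combination h6 / 6

end Field

theorem sum_range_ite_dvd_add {M : Type*} [AddCommMonoid M] {r a : ℕ} (ha : a < r) (f : ℕ → M)
    (hf : f 0 = f r) : ∑ k ∈ range r, (if r ∣ a + k then f k else 0) = f (r - a) := by
  rcases Nat.eq_zero_or_pos a with rfl | ha0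
  · rw [Nat.sub_zero, ← hf, sum_eq_single 0]
    · simp
    · intro k hk hk0
      rw [zero_add, if_neg fun hd => hk0 (Nat.eq_zero_of_dvd_of_lt hd (mem_range.1 hk))]
    · simp [ha]
  · rw [sum_eq_single (r - a)]
    · rw [if_pos ⟨1, by omega⟩]
    · intro k hk hkne
      have hkr := mem_range.1 hk
      refine if_neg fun hd => hkne ?_
      have := Nat.eq_of_dvd_of_lt_two_mul (by omega) hd (by omega)
      omega
    · intro h
      simp at h
      omega

theorem primitive_root_sum_general (r : ℕ) (ζ : ℂ) (hζ : IsPrimitiveRoot ζ r)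
    (a : ℕ) (ha : a < r) :
    ∑ j ∈ Finset.Ico 1 r, ζ ^ ((a + 1) * j) / (1 - ζ ^ j) ^ 2 =
      (1 - (r : ℂ) ^ 2) / 12 + (a : ℂ) * ((r : ℂ) - (a : ℂ)) / 2 := by
  have hr : 0 < r := by omega
  have hexpand : ∀ j ∈ Ico 1 r, ζ ^ ((a + 1) * j) / (1 - ζ ^ j) ^ 2 =
      ∑ k ∈ range r, (k : ℂ) * (r - k) / (2 * r) * (ζ ^ j) ^ (a + k) := by
    intro j hj
    obtain ⟨hj1, hjr⟩ := mem_Ico.1 hj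
    rw [mul_comm, pow_mul]
    refine pow_succ_div_one_sub_sq_eq_sum_range hr ?_ (hζ.pow_ne_one_of_pos_of_lt (by omega) hjr) a
    rw [← pow_mul, mul_comm, pow_mul, hζ.pow_eq_one, one_pow]
  rw [sum_congr rfl hexpand, sum_comm]
  simp_rw [← mul_sum, hζ.sum_Ico_pow_pow hr, mul_sub_one, sum_sub_distrib, mul_ite, mul_zero]
  rw [sum_range_ite_dvd_add ha _ (by simp), sum_range_mul_sub_div hr.ne', Nat.cast_sub ha.le]
  have hr0 : (r : ℂ) ≠ 0 := Nat.cast_ne_zero.2 hr.ne'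
  field_simp
  ring

/-- For a primitive `r`-th root of unity `ζ` and `0 ≤ a < r`,
`Σ_{j=1}^{r-1} ζ^{(a+1)j}/(1-ζ^j)² = (1 - r²)/12 + a(r-a)/2`. -/
theorem primitive_root_sum (r : ℕ) (hr : 1 ≤ r) (ζ : ℂ) (hζ : IsPrimitiveRoot ζ r)
    (a : ℕ) (ha : a < r) :
    ∑ j ∈ Finset.Ico 1 r, ζ ^ ((a + 1) * j) / (1 - ζ ^ j) ^ 2 =
      (1 - (r : ℂ) ^ 2) / 12 + (a : ℂ) * ((r : ℂ) - (a : ℂ)) / 2 :=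
  primitive_root_sum_general r ζ hζ a ha
end

section
/- Let W be a nondegenerate quasi-homogeneous polynomial and γ ∈ G_W a diagonal symmetry. If W = W_γ + W_moved, where W_γ is the restriction of W to the variables fixed by γ and W_moved collects the remaining monomials, then W_moved lies in the square of the ideal 𝔪 generated by the variables not fixed by γ. -/
/-!
Scaling the variables by `γ` multiplies the coefficient of `x^d` by `γ^d = ∏ γ_k ^ d_k`, so every
monomial of a `γ`-invariant `W` has `γ^d = 1`. If such a monomial contains a moved variable `x_i`
only to the first power and no other moved variable, then `γ^d = γ_i ≠ 1`; hence it is divisible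
by a product `x_i x_j` of two moved variables and lies in `𝔪²`.
-/

namespace MvPolynomial

variable {R σ : Type*} [CommSemiring R]

theorem aeval_C_mul_X_monomial_s3 (γ : σ → R) (d : σ →₀ ℕ) (c : R) :
    aeval (fun i => C (γ i) * X i) (monomial d c) =
      monomial d (d.prod (fun k n => γ k ^ n) * c) := by
  rw [aeval_monomial, monomial_eq, C_mul, algebraMap_eq]
  simp only [mul_pow, Finsupp.prod_mul, ← C_pow, ← map_finsuppProd]
  ring

theorem coeff_aeval_C_mul_X_s3 (γ : σ → R) (p : MvPolynomial σ R) (d : σ →₀ ℕ) :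
    coeff d (aeval (fun i => C (γ i) * X i) p) = d.prod (fun k n => γ k ^ n) * coeff d p := by
  induction p using MvPolynomial.induction_on' with
  | monomial e c =>
    classical
    rw [aeval_C_mul_X_monomial_s3, coeff_monomial, coeff_monomial]
    split_ifs with h
    · rw [h]
    · rw [mul_zero]
  | add p q hp hq => rw [map_add, coeff_add, coeff_add, hp, hq, mul_add]

end MvPolynomial

namespace Finsupp

variable {σ M : Type*} [CommMonoid M]

theorem exists_single_add_single_le_of_prod_pow_eq_one {γ : σ → M} {d : σ →₀ ℕ}
    (hd : d.prod (fun k n => γ k ^ n) = 1) {i : σ} (hi : γ i ≠ 1) (hdi : d i ≠ 0) :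
    ∃ j, γ j ≠ 1 ∧ single i 1 + single j 1 ≤ d := by
  have hid : single i 1 ≤ d := single_le_iff.mpr (Nat.one_le_iff_ne_zero.mpr hdi)
  set e := d - single i 1
  simp_rw [← le_tsub_iff_left hid, single_le_iff, Nat.one_le_iff_ne_zero]
  by_contra! he
  have hprod_e : e.prod (fun k n => γ k ^ n) = 1 :=
    Finset.prod_eq_one fun k hk => by
      by_cases hk1 : γ k = 1
      · show γ k ^ e k = 1
        rw [hk1, one_pow]
      · exact absurd (he k hk1) (mem_support_iff.mp hk)
  apply hi
  rw [← hd, ← add_tsub_cancel_of_le hid,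
    prod_add_index' (fun _ => pow_zero _) (fun _ _ _ => pow_add _ _ _),
    prod_single_index (h := fun k n => γ k ^ n) (pow_zero _), hprod_e, pow_one, mul_one]

end Finsupp

open MvPolynomial

attribute [local instance] Classical.propDecidable

/-- If `γ` is a diagonal symmetry of `W`, then the "moved" part of `W` (the sum of
monomials of `W` involving a variable not fixed by `γ`) lies in the square of the
ideal `𝔪` generated by the variables not fixed by `γ`. -/
theorem moved_part_in_square (N : ℕ) (W : MvPolynomial (Fin N) ℂ) (γ : Fin N → ℂˣ)
    (hγ : MvPolynomial.aeval (fun i => MvPolynomial.C (γ i : ℂ) * MvPolynomial.X i) W = W) :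
    (∑ d ∈ W.support.filter (fun d => ∃ i, (γ i : ℂ) ≠ 1 ∧ d i ≠ 0),
        MvPolynomial.monomial d (W.coeff d)) ∈
      (Ideal.span {p : MvPolynomial (Fin N) ℂ | ∃ i, (γ i : ℂ) ≠ 1 ∧ p = MvPolynomial.X i}) ^ 2 := by
  refine Ideal.sum_mem _ fun d hd => ?_
  obtain ⟨hdW, i, hγi, hdi⟩ := Finset.mem_filter.mp hd
  have hinv : d.prod (fun k n => (γ k : ℂ) ^ n) = 1 := by
    have h := coeff_aeval_C_mul_X_s3 (fun k => (γ k : ℂ)) W d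
    rw [hγ] at h
    exact mul_eq_right₀ (mem_support_iff.mp hdW) |>.mp h.symm
  obtain ⟨j, hγj, hij⟩ := Finsupp.exists_single_add_single_le_of_prod_pow_eq_one hinv hγi hdi
  have hdvd : X i * X j ∣ monomial d (W.coeff d) := by
    rw [X, X, monomial_mul, one_mul]
    exact monomial_dvd_monomial.mpr ⟨Or.inr hij, one_dvd _⟩
  refine Ideal.mem_of_dvd _ hdvd ?_
  rw [sq]
  exact Ideal.mul_mem_mul (Ideal.subset_span ⟨i, hγi, rfl⟩) (Ideal.subset_span ⟨j, hγj, rfl⟩)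
end

section
/- Let W be a nondegenerate quasi-homogeneous polynomial (isolated critical point only at the origin) and γ ∈ G_W. Then the restriction W_γ of W to the fixed locus ℂ^N_γ of γ has no critical points other than the origin. -/
/-!
At a point `z` of the fixed locus, the partial derivatives of `W` vanish in both kinds of
directions. In a fixed direction `i`, substituting `0` for the moved variables does not change
`∂ᵢW` at `z`, so `∂ᵢW(z) = ∂ᵢW_γ(z) = 0`. In a moved direction `i`, differentiating
`W(γ x) = W(x)` gives `γᵢ ∂ᵢW(γ z) = ∂ᵢW(z)`, and `γ z = z`, so `(γᵢ - 1) ∂ᵢW(z) = 0`.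
Hence `z` is a critical point of `W`, i.e. `z = 0`.
-/

open MvPolynomial

section
variable {R σ : Type*}

section CommSemiring
variable [CommSemiring R]

theorem pderiv_aeval {τ : Type*} [Fintype σ] (g : σ → MvPolynomial τ R) (p : MvPolynomial σ R)
    (i : τ) :
    pderiv i (aeval g p) = ∑ j, aeval g (pderiv j p) * pderiv i (g j) := by
  classical
  induction p using MvPolynomial.induction_on with
  | C a => simp
  | add p q hp hq => simp only [map_add, hp, hq, add_mul, Finset.sum_add_distrib]
  | mul_X p j hp =>
    rw [map_mul, aeval_X, pderiv_mul, hp]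
    simp only [pderiv_mul, pderiv_X, map_add, map_mul, aeval_X, add_mul, Finset.sum_add_distrib,
      Finset.sum_mul, Pi.single_apply, apply_ite (aeval g), map_zero, mul_ite, mul_one, mul_zero,
      ite_mul, zero_mul, Finset.sum_ite_eq, Finset.mem_univ, if_true, mul_right_comm _ (g j)]

theorem pderiv_aeval_of_pderiv_eq_zero [Fintype σ] {g : σ → MvPolynomial σ R} {i : σ}
    (hg : ∀ j ≠ i, pderiv i (g j) = 0) (p : MvPolynomial σ R) :
    pderiv i (aeval g p) = aeval g (pderiv i p) * pderiv i (g i) := by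
  rw [pderiv_aeval, Finset.sum_eq_single i (fun j _ hj => by rw [hg j hj, mul_zero])
    (fun h => absurd (Finset.mem_univ i) h)]

theorem eval_aeval_of_eval_eq {z : σ → R} {g : σ → MvPolynomial σ R}
    (hg : ∀ j, eval z (g j) = z j) (p : MvPolynomial σ R) :
    eval z (aeval g p) = eval z p := by
  simpa only [← aeval_eq_bind₁, aeval_eq_eval, hg] using aeval_bind₁ z g p

theorem eval_pderiv_aeval_restrict [Fintype σ] {P : σ → Prop} [DecidablePred P] {z : σ → R}
    (hz : ∀ j, ¬P j → z j = 0) {i : σ} (hi : P i) (p : MvPolynomial σ R) :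
    eval z (pderiv i (aeval (fun j => if P j then X j else 0) p)) = eval z (pderiv i p) := by
  have hsubst : ∀ j, eval z (if P j then X j else 0) = z j := fun j => by
    by_cases h : P j <;> simp [h, hz]
  rw [pderiv_aeval_of_pderiv_eq_zero (fun j hj => by split_ifs <;> simp [pderiv_X_of_ne hj]),
    if_pos hi, pderiv_X_self, mul_one, eval_aeval_of_eval_eq hsubst]

end CommSemiring

theorem eval_pderiv_eq_zero_of_diagonal_invariant [CommRing R] [NoZeroDivisors R] [Fintype σ]
    {c : σ → R} {p : MvPolynomial σ R} (hp : aeval (fun j => C (c j) * X j) p = p)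
    {z : σ → R} (hz : ∀ j, c j ≠ 1 → z j = 0) {i : σ} (hi : c i ≠ 1) :
    eval z (pderiv i p) = 0 := by
  have hfixed : ∀ j, eval z (C (c j) * X j) = z j := fun j => by
    by_cases h : c j = 1 <;> simp [h, hz]
  have hderiv : pderiv i p = aeval (fun j => C (c j) * X j) (pderiv i p) * C (c i) := by
    conv_lhs => rw [← hp]
    rw [pderiv_aeval_of_pderiv_eq_zero (fun j hj => by simp [pderiv_X_of_ne hj])]
    simp
  have heval := congrArg (eval z) hderiv
  rw [map_mul, eval_aeval_of_eval_eq hfixed, eval_C] at heval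
  have hprod : (c i - 1) * eval z (pderiv i p) = 0 := by linear_combination -heval
  exact (mul_eq_zero.mp hprod).resolve_left (sub_ne_zero.mpr hi)

end

/-- Let `W` be a polynomial whose only critical point is the origin, and let `γ` be a
diagonal symmetry of `W`.  Then the restriction `W_γ` of `W` to the fixed locus of `γ`
(obtained by substituting `0` for the moved variables) has no critical point on the
fixed locus other than the origin. -/
theorem restriction_no_nontrivial_critical_points (N : ℕ) (W : MvPolynomial (Fin N) ℂ)
    (hW : ∀ z : Fin N → ℂ, (∀ i, MvPolynomial.eval z (MvPolynomial.pderiv i W) = 0) → z = 0)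
    (γ : Fin N → ℂˣ)
    (hγ : MvPolynomial.aeval (fun i => MvPolynomial.C (γ i : ℂ) * MvPolynomial.X i) W = W)
    (z : Fin N → ℂ) (hz : ∀ i, (γ i : ℂ) ≠ 1 → z i = 0)
    (hcrit : ∀ i, MvPolynomial.eval z
        (MvPolynomial.pderiv i
          (MvPolynomial.aeval
            (fun j => if (γ j : ℂ) = 1 then (MvPolynomial.X j : MvPolynomial (Fin N) ℂ) else 0)
            W)) = 0) :
    z = 0 := by
  refine hW z fun i => ?_
  by_cases hi : (γ i : ℂ) = 1
  · rw [← eval_pderiv_aeval_restrict hz hi]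
    exact hcrit i
  · exact eval_pderiv_eq_zero_of_diagonal_invariant hγ hz hi
end
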